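/- Suppose r, s satisfy either (rᵐsⁿ = 1 ⟹ m = n = 0) or (r = s⁻¹ = q not a root of unity). Then any surjective K-algebra endomorphism of the down-up algebra A(r+s, -rs) is an algebra automorphism. -/

import Mathlib

/-!
The map `grading : A → A[X]`, `d ↦ d X`, `u ↦ u X`, records word length: the coefficient of
`X ^ k` in `grading z` lies in `V ^ k` for `V = span {d, u}`, and evaluation at `1` inverts it.
Hence the subspaces `F m = {z | X ^ m ∣ grading z}` form a separated filtration of `A` with
finite-dimensional quotients `A ⧸ F m`.

A surjective endomorphism `θ` kills neither `d` nor `u`, for otherwise its image `A` would be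
commutative, whereas `d u ≠ u d` already in a nilpotent `3 × 3` matrix representation. If the
constant term `a` of `θ d` were nonzero, the lowest coefficient `c` of `grading (θ u)` would
satisfy `(1 - r) (1 - s) a² c = 0` by the first defining relation; symmetrically for `θ u`. So
`θ d, θ u ∈ F 1`, `θ` preserves every `F m`, and the induced surjective endomorphisms of the
finite-dimensional `A ⧸ F m` are injective: the kernel of `θ` lies in `⋂ F m = 0`.
-/

noncomputable section

/-- The defining relations of the down-up algebra `A(r+s, -rs)`:
`d²u = (r+s)·dud - rs·ud²` and `du² = (r+s)·udu - rs·u²d`,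
where `d` is the generator indexed by `0` and `u` the one indexed by `1`. -/
inductive DownUpRel (K : Type) [CommRing K] (r s : K) :
    FreeAlgebra K (Fin 2) → FreeAlgebra K (Fin 2) → Prop
  | rel1 : DownUpRel K r s
      (FreeAlgebra.ι K 0 * FreeAlgebra.ι K 0 * FreeAlgebra.ι K 1)
      ((r + s) • (FreeAlgebra.ι K 0 * FreeAlgebra.ι K 1 * FreeAlgebra.ι K 0)
        - (r * s) • (FreeAlgebra.ι K 1 * FreeAlgebra.ι K 0 * FreeAlgebra.ι K 0))
  | rel2 : DownUpRel K r s
      (FreeAlgebra.ι K 0 * FreeAlgebra.ι K 1 * FreeAlgebra.ι K 1)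
      ((r + s) • (FreeAlgebra.ι K 1 * FreeAlgebra.ι K 0 * FreeAlgebra.ι K 1)
        - (r * s) • (FreeAlgebra.ι K 1 * FreeAlgebra.ι K 1 * FreeAlgebra.ι K 0))

/-- The down-up algebra `A(r+s, -rs)`. -/
abbrev DownUp (K : Type) [CommRing K] (r s : K) : Type := RingQuot (DownUpRel K r s)

/-- The generator `d` of the down-up algebra. -/
def DownUp.d (K : Type) [CommRing K] (r s : K) : DownUp K r s :=
  RingQuot.mkAlgHom K (DownUpRel K r s) (FreeAlgebra.ι K 0)

/-- The generator `u` of the down-up algebra. -/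
def DownUp.u (K : Type) [CommRing K] (r s : K) : DownUp K r s :=
  RingQuot.mkAlgHom K (DownUpRel K r s) (FreeAlgebra.ι K 1)

/-- The element `x = du - r·ud`. -/
def DownUp.x (K : Type) [CommRing K] (r s : K) : DownUp K r s :=
  DownUp.d K r s * DownUp.u K r s - r • (DownUp.u K r s * DownUp.d K r s)

/-- The element `y = ud - s·du`. -/
def DownUp.y (K : Type) [CommRing K] (r s : K) : DownUp K r s :=
  DownUp.u K r s * DownUp.d K r s - s • (DownUp.d K r s * DownUp.u K r s)

open Polynomial

theorem Polynomial.eq_zero_of_smul_add_smul_add_smul_eq_zero {K A : Type*} [Field K] [Ring A]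
    [Algebra K A] {P Q : A[X]} {a α β γ : K} (ha : a ≠ 0) (hP : P.coeff 0 = algebraMap K A a)
    (hαβγ : α + β + γ ≠ 0)
    (h : α • (P * P * Q) + β • (P * Q * P) + γ • (Q * P * P) = 0) : Q = 0 := by
  by_contra hQ
  set k := Q.natTrailingDegree
  have hQk : Q.coeff k ≠ 0 := trailingCoeff_nonzero_iff_nonzero.2 hQ
  obtain ⟨Q', hQ'⟩ : X ^ k ∣ Q :=
    X_pow_dvd_iff.2 fun _ => coeff_eq_zero_of_lt_natTrailingDegree
  rw [hQ', coeff_X_pow_mul', if_pos le_rfl, Nat.sub_self] at hQk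
  rw [hQ', X_pow_mul] at h
  have h' : α • (P * P * Q') + β • (P * Q' * P) + γ • (Q' * P * P) = 0 := by
    refine mul_X_pow_eq_zero (n := k) ?_
    simpa only [add_mul, smul_mul_assoc, mul_assoc, X_pow_mul] using h
  apply hQk
  have h0 := congrArg (coeff · 0) h'
  simp only [coeff_add, coeff_smul, mul_coeff_zero, hP, coeff_zero, ← Algebra.commutes a]
    at h0
  simp only [← Algebra.smul_def, smul_mul_assoc, smul_smul, ← add_smul] at h0
  exact (smul_eq_zero.1 h0).resolve_left <|
    by rw [← add_mul, ← add_mul]; exact mul_ne_zero hαβγ (mul_ne_zero ha ha)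

namespace DownUp

section CommRing

variable {K : Type} [CommRing K] {r s : K}

variable (K r s) in
theorem d_mul_d_mul_u : d K r s * d K r s * u K r s =
    (r + s) • (d K r s * u K r s * d K r s) - (r * s) • (u K r s * d K r s * d K r s) := by
  simpa only [map_mul, map_sub, map_smul, d, u] using
    RingQuot.mkAlgHom_rel K (DownUpRel.rel1 (r := r) (s := s))

variable (K r s) in
theorem d_mul_u_mul_u : d K r s * u K r s * u K r s =
    (r + s) • (u K r s * d K r s * u K r s) - (r * s) • (u K r s * u K r s * d K r s) := by
  simpa only [map_mul, map_sub, map_smul, d, u] using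
    RingQuot.mkAlgHom_rel K (DownUpRel.rel2 (r := r) (s := s))

section lift

variable {B : Type*} [Ring B] [Algebra K B] (D U : B)
  (h₁ : D * D * U = (r + s) • (D * U * D) - (r * s) • (U * D * D))
  (h₂ : D * U * U = (r + s) • (U * D * U) - (r * s) • (U * U * D))

def lift : DownUp K r s →ₐ[K] B :=
  RingQuot.liftAlgHom K ⟨FreeAlgebra.lift K ![D, U], by rintro _ _ ⟨⟩ <;> simp [h₁, h₂]⟩

@[simp] theorem lift_d : lift D U h₁ h₂ (d K r s) = D := by
  simp [lift, d]

@[simp] theorem lift_u : lift D U h₁ h₂ (u K r s) = U := by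
  simp [lift, u]

end lift

@[ext] theorem algHom_ext {B : Type*} [Semiring B] [Algebra K B] {f g : DownUp K r s →ₐ[K] B}
    (hd : f (d K r s) = g (d K r s)) (hu : f (u K r s) = g (u K r s)) : f = g := by
  refine RingQuot.ringQuot_ext' _ _ _ (FreeAlgebra.hom_ext (funext fun i => ?_))
  fin_cases i
  exacts [hd, hu]

@[elab_as_elim]
theorem induction {p : DownUp K r s → Prop} (algebraMap : ∀ c : K, p (algebraMap K _ c))
    (d : p (d K r s)) (u : p (u K r s)) (add : ∀ a b, p a → p b → p (a + b))
    (mul : ∀ a b, p a → p b → p (a * b)) (z : DownUp K r s) : p z := by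
  obtain ⟨w, rfl⟩ := RingQuot.mkAlgHom_surjective K (DownUpRel K r s) z
  induction w using FreeAlgebra.induction with
  | grade0 c => simpa only [AlgHom.commutes] using algebraMap c
  | grade1 i => fin_cases i; exacts [d, u]
  | mul a b ha hb => simpa only [map_mul] using mul _ _ ha hb
  | add a b ha hb => simpa only [map_add] using add _ _ ha hb

variable (K r s) in
theorem adjoin_d_u : Algebra.adjoin K {d K r s, u K r s} = ⊤ :=
  eq_top_iff.2 fun z _ => induction (Subalgebra.algebraMap_mem _)
    (Algebra.subset_adjoin (Set.mem_insert _ _))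
    (Algebra.subset_adjoin (Set.mem_insert_of_mem _ rfl))
    (fun _ _ => add_mem) (fun _ _ => mul_mem) z

theorem range_eq_adjoin {B : Type*} [Semiring B] [Algebra K B] (f : DownUp K r s →ₐ[K] B) :
    f.range = Algebra.adjoin K {f (d K r s), f (u K r s)} := by
  rw [← Algebra.map_top, ← adjoin_d_u, AlgHom.map_adjoin, Set.image_pair]

variable (K r s) in
theorem d_mul_u_ne_u_mul_d [Nontrivial K] : d K r s * u K r s ≠ u K r s * d K r s := by
  let D : Matrix (Fin 3) (Fin 3) K := Matrix.single 0 1 1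
  let U : Matrix (Fin 3) (Fin 3) K := Matrix.single 1 2 1
  -- all cubic words in `D` and `U` vanish, so both relations hold trivially
  have h₁ : D * D * U = (r + s) • (D * U * D) - (r * s) • (U * D * D) := by simp [D, U]
  have h₂ : D * U * U = (r + s) • (U * D * U) - (r * s) • (U * U * D) := by simp [D, U]
  intro h
  simpa [D, U] using congrArg (fun z => lift D U h₁ h₂ z 0 2) h

variable (K r s) in
def grading : DownUp K r s →ₐ[K] (DownUp K r s)[X] :=
  lift (C (d K r s) * X) (C (u K r s) * X)
    (by simp only [C_mul_X_eq_monomial, monomial_mul_monomial, d_mul_d_mul_u, map_sub,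
      smul_monomial])
    (by simp only [C_mul_X_eq_monomial, monomial_mul_monomial, d_mul_u_mul_u, map_sub,
      smul_monomial])

@[simp] theorem grading_d : grading K r s (d K r s) = C (d K r s) * X := lift_d ..

@[simp] theorem grading_u : grading K r s (u K r s) = C (u K r s) * X := lift_u ..

theorem eval_one_grading (z : DownUp K r s) : (grading K r s z).eval 1 = z := by
  let σ := eval₂AlgHom (AlgHom.id K (DownUp K r s)) 1 fun _ => Commute.one_right _
  have : σ.comp (grading K r s) = AlgHom.id K _ := algHom_ext (by simp [σ]) (by simp [σ])
  exact DFunLike.congr_fun this z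

theorem grading_injective : Function.Injective (grading K r s) :=
  Function.LeftInverse.injective eval_one_grading

variable (K r s) in
def spanGenerators : Submodule K (DownUp K r s) := Submodule.span K {d K r s, u K r s}

theorem coeff_grading_mem (z : DownUp K r s) (k : ℕ) :
    (grading K r s z).coeff k ∈ spanGenerators K r s ^ k := by
  induction z using induction generalizing k with
  | algebraMap c =>
    rw [AlgHom.commutes, Polynomial.algebraMap_apply, coeff_C]
    split_ifs with hk
    · subst hk; exact Submodule.algebraMap_mem c
    · exact zero_mem _
  | d =>
    rw [grading_d, coeff_C_mul_X]
    split_ifs with hk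
    · subst hk; rw [pow_one]; exact Submodule.subset_span (Set.mem_insert _ _)
    · exact zero_mem _
  | u =>
    rw [grading_u, coeff_C_mul_X]
    split_ifs with hk
    · subst hk; rw [pow_one]; exact Submodule.subset_span (Set.mem_insert_of_mem _ rfl)
    · exact zero_mem _
  | add a b ha hb => rw [map_add, coeff_add]; exact add_mem (ha k) (hb k)
  | mul a b ha hb =>
    rw [map_mul, coeff_mul]
    refine sum_mem fun ij hij => ?_
    rw [← Finset.HasAntidiagonal.mem_antidiagonal.1 hij, pow_add]
    exact Submodule.mul_mem_mul (ha ij.1) (hb ij.2)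

theorem sum_coeff_grading (z : DownUp K r s) :
    ∑ k ∈ Finset.range ((grading K r s z).natDegree + 1), (grading K r s z).coeff k = z := by
  simpa [eval_eq_sum_range] using eval_one_grading z

variable (K r s) in
def filtration (m : ℕ) : Submodule K (DownUp K r s) where
  carrier := {z | X ^ m ∣ grading K r s z}
  add_mem' {a b} ha hb := by
    change X ^ m ∣ grading K r s (a + b)
    rw [map_add]
    exact dvd_add ha hb
  zero_mem' := by simp
  smul_mem' c z hz := by
    change X ^ m ∣ grading K r s (c • z)
    rw [map_smul, Algebra.smul_def, Algebra.commutes]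
    exact hz.mul_right _

theorem mem_filtration {m : ℕ} {z : DownUp K r s} :
    z ∈ filtration K r s m ↔ X ^ m ∣ grading K r s z := Iff.rfl

theorem mem_filtration_one {z : DownUp K r s} :
    z ∈ filtration K r s 1 ↔ (grading K r s z).coeff 0 = 0 := by
  rw [mem_filtration, pow_one, X_dvd_iff]

theorem filtration_antitone : Antitone (filtration K r s) :=
  fun _ _ h _ hz => (pow_dvd_pow X h).trans hz

theorem filtration_zero : filtration K r s 0 = ⊤ :=
  eq_top_iff.2 fun z _ => by simp [mem_filtration]

theorem filtration_mul_le (a b : ℕ) :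
    filtration K r s a * filtration K r s b ≤ filtration K r s (a + b) := by
  refine Submodule.mul_le.2 fun x ⟨p, hp⟩ y ⟨q, hq⟩ => ⟨p * q, ?_⟩
  rw [map_mul, hp, hq, pow_add, mul_assoc, ← mul_assoc p, ← (commute_X_pow p b).eq, mul_assoc,
    mul_assoc]

theorem pow_le_filtration {M : Submodule K (DownUp K r s)} (hM : M ≤ filtration K r s 1) :
    ∀ k, M ^ k ≤ filtration K r s k
  | 0 => by rw [filtration_zero]; exact le_top
  | k + 1 => by
    rw [pow_succ]
    exact (mul_le_mul' (pow_le_filtration hM k) hM).trans (filtration_mul_le k 1)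

theorem spanGenerators_le_filtration_one : spanGenerators K r s ≤ filtration K r s 1 := by
  refine Submodule.span_le.2 ?_
  rintro _ (rfl | rfl) <;> simp [mem_filtration_one]

theorem eq_zero_of_forall_mem_filtration {z : DownUp K r s} (h : ∀ m, z ∈ filtration K r s m) :
    z = 0 := by
  refine grading_injective ((map_zero (grading K r s)).symm ▸ ?_)
  ext j
  exact X_pow_dvd_iff.1 (h (j + 1)) j j.lt_succ_self

theorem finite_quotient_filtration (m : ℕ) :
    Module.Finite K (DownUp K r s ⧸ filtration K r s m) := by
  let S := ⨆ k : Fin m, spanGenerators K r s ^ (k : ℕ)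
  have hS : S.FG := Submodule.fg_iSup _ fun k => (Submodule.fg_span (by simp)).pow _
  have hsup : filtration K r s m ⊔ S = ⊤ := by
    refine eq_top_iff.2 fun z _ => sum_coeff_grading z ▸ sum_mem fun k _ => ?_
    rcases lt_or_ge k m with hk | hk
    · exact Submodule.mem_sup_right <| Submodule.mem_iSup_of_mem (⟨k, hk⟩ : Fin m)
        (coeff_grading_mem z k)
    · exact Submodule.mem_sup_left <| filtration_antitone hk <|
        pow_le_filtration spanGenerators_le_filtration_one k (coeff_grading_mem z k)
  rw [Module.finite_def, ← (Submodule.map_mkQ_eq_top _ _).2 hsup]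
  exact hS.map _

variable {θ : DownUp K r s →ₐ[K] DownUp K r s}

theorem map_mem_filtration (hd : θ (d K r s) ∈ filtration K r s 1)
    (hu : θ (u K r s) ∈ filtration K r s 1) {m : ℕ} {z : DownUp K r s}
    (hz : z ∈ filtration K r s m) : θ z ∈ filtration K r s m := by
  have hθ (k : ℕ) : (spanGenerators K r s ^ k).map θ.toLinearMap ≤ filtration K r s k := by
    rw [Submodule.map_pow, spanGenerators, Submodule.map_span, Set.image_pair]
    exact pow_le_filtration (Submodule.span_le.2 <| Set.insert_subset hd <| by simpa using hu) k
  rw [← sum_coeff_grading z, map_sum]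
  refine sum_mem fun k _ => ?_
  rcases lt_or_ge k m with hk | hk
  · rw [X_pow_dvd_iff.1 hz k hk, map_zero]
    exact zero_mem _
  · exact filtration_antitone hk (hθ k ⟨_, coeff_grading_mem z k, rfl⟩)

theorem injective_of_surjective_of_mem_filtration (hsurj : Function.Surjective θ)
    (hd : θ (d K r s) ∈ filtration K r s 1) (hu : θ (u K r s) ∈ filtration K r s 1) :
    Function.Injective θ := by
  refine (injective_iff_map_eq_zero θ).2 fun z hz => eq_zero_of_forall_mem_filtration fun m => ?_
  let F := filtration K r s m
  have := finite_quotient_filtration (r := r) (s := s) m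
  let θF : (DownUp K r s ⧸ F) →ₗ[K] DownUp K r s ⧸ F :=
    F.mapQ F θ.toLinearMap fun _ => map_mem_filtration hd hu
  have hθF : Function.Surjective θF := by
    rintro ⟨y⟩
    obtain ⟨x, rfl⟩ := hsurj y
    exact ⟨F.mkQ x, rfl⟩
  have : θF (F.mkQ z) = θF 0 := by
    change F.mkQ (θ z) = θF 0
    rw [hz, map_zero, map_zero]
  exact (Submodule.Quotient.mk_eq_zero F).1 <|
    OrzechProperty.injective_of_surjective_endomorphism θF hθF this

theorem not_commute_map_d_map_u [Nontrivial K] (hsurj : Function.Surjective θ) :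
    ¬Commute (θ (d K r s)) (θ (u K r s)) := by
  intro h
  have hgen : ∀ a ∈ ({θ (d K r s), θ (u K r s)} : Set _),
      ∀ b ∈ ({θ (d K r s), θ (u K r s)} : Set _), Commute a b := by
    rintro _ (rfl | rfl) _ (rfl | rfl)
    exacts [Commute.refl _, h, h.symm, Commute.refl _]
  have hcomm {x y : DownUp K r s} (hx : x ∈ θ.range) (hy : y ∈ θ.range) : Commute x y := by
    rw [range_eq_adjoin] at hx hy
    exact Algebra.commute_of_mem_adjoin_of_forall_mem_commute hy fun b hb =>
      (Algebra.commute_of_mem_adjoin_of_forall_mem_commute hx fun a ha => hgen b hb a ha).symm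
  exact d_mul_u_ne_u_mul_d K r s (hcomm (hsurj _) (hsurj _)).eq

end CommRing

section Field

variable {K : Type} [Field K] {r s : K} {θ : DownUp K r s →ₐ[K] DownUp K r s}

theorem mem_filtration_one_of_relation {D U : DownUp K r s} {α β γ : K} (hU : U ≠ 0)
    (hαβγ : α + β + γ ≠ 0)
    (h : α • (D * D * U) + β • (D * U * D) + γ • (U * D * D) = 0) : D ∈ filtration K r s 1 := by
  obtain ⟨a, ha⟩ :=
    Submodule.mem_one.1 (pow_zero (spanGenerators K r s) ▸ coeff_grading_mem D 0)
  rw [mem_filtration_one, ← ha]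
  by_contra hne
  refine hU (grading_injective ?_)
  rw [map_zero]
  refine eq_zero_of_smul_add_smul_add_smul_eq_zero (fun h0 => hne (by rw [h0, map_zero]))
    ha.symm hαβγ ?_
  simpa only [map_add, map_smul, map_mul, map_zero] using congrArg (grading K r s) h

theorem map_mem_filtration_one (hr : r ≠ 1) (hs : s ≠ 1) (hsurj : Function.Surjective θ) :
    θ (d K r s) ∈ filtration K r s 1 ∧ θ (u K r s) ∈ filtration K r s 1 := by
  have hrs : (1 - r) * (1 - s) ≠ 0 :=
    mul_ne_zero (sub_ne_zero.2 hr.symm) (sub_ne_zero.2 hs.symm)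
  have hθ := not_commute_map_d_map_u hsurj
  have h₁ := congrArg θ (d_mul_d_mul_u K r s)
  have h₂ := congrArg θ (d_mul_u_mul_u K r s)
  simp only [map_mul, map_sub, map_smul] at h₁ h₂
  constructor
  · refine mem_filtration_one_of_relation (U := θ (u K r s)) (α := 1) (β := -(r + s))
      (γ := r * s) (fun h => hθ (h ▸ Commute.zero_right _)) (by convert hrs using 1; ring) ?_
    rw [h₁]
    module
  · refine mem_filtration_one_of_relation (U := θ (d K r s)) (α := r * s) (β := -(r + s))
      (γ := 1) (fun h => hθ (h ▸ Commute.zero_left _)) (by convert hrs using 1; ring) ?_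
    rw [h₂]
    module

end Field

end DownUp

theorem stmt16_general (K : Type) [Field K] (r s : K)
    (hcase : (∀ m n : ℤ, r ^ m * s ^ n = 1 → m = 0 ∧ n = 0) ∨
      (s = r⁻¹ ∧ ∀ n : ℕ, 0 < n → r ^ n ≠ 1))
    (θ : DownUp K r s →ₐ[K] DownUp K r s) (hsurj : Function.Surjective θ) :
    Function.Bijective θ := by
  obtain ⟨hr, hs⟩ : r ≠ 1 ∧ s ≠ 1 := by
    rcases hcase with h | ⟨rfl, h⟩
    · exact ⟨fun hr => by simpa using h 1 0 (by simp [hr]),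
        fun hs => by simpa using h 0 1 (by simp [hs])⟩
    · have hr : r ≠ 1 := fun hr => h 1 one_pos (by simpa using hr)
      exact ⟨hr, fun hs => hr (inv_eq_one.1 hs)⟩
  obtain ⟨hd, hu⟩ := DownUp.map_mem_filtration_one hr hs hsurj
  exact ⟨DownUp.injective_of_surjective_of_mem_filtration hsurj hd hu, hsurj⟩

/-- Suppose `r, s ∈ K*` satisfy either (`rᵐsⁿ = 1 → m = n = 0`) or
(`r = s⁻¹ = q` is not a root of unity).  Then any surjective `K`-algebra
endomorphism of the down-up algebra `A(r+s, -rs)` is an algebra automorphism. -/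
theorem stmt16 (K : Type) [Field K] [CharZero K] (r s : K) (hr : r ≠ 0) (hs : s ≠ 0)
    (hcase : (∀ m n : ℤ, r ^ m * s ^ n = 1 → m = 0 ∧ n = 0) ∨
      (s = r⁻¹ ∧ ∀ n : ℕ, 0 < n → r ^ n ≠ 1))
    (θ : DownUp K r s →ₐ[K] DownUp K r s) (hsurj : Function.Surjective θ) :
    Function.Bijective θ :=
  stmt16_general K r s hcase θ hsurj
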